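/- The set Ĝ_Σ of irreducible representations fixing Σ is closed under: containing the trivial representation, conjugation (γ ∈ Ĝ_Σ ⟹ γ̄ ∈ Ĝ_Σ), and taking irreducible constituents of tensor products of its elements; hence Ĝ_Σ generates a quantum subgroup. -/

import Mathlib

/-!
The trivial representation has empty boundary. For the other two closure properties one
covers a boundary by fusion partners of another boundary: if `α ∈ ∂_{γ̄}(F)` then Frobenius
reciprocity gives `β ∈ ∂_γ(F)` with `α ⊂ β ⊗ γ`, and if `α ∈ ∂_γ(F) \ ∂_{γ₁}(F)` with
`γ ⊂ γ₁ ⊗ γ₂`, associativity gives `η ∈ ∂_{γ₂}(F)` with `η ⊂ α ⊗ γ₁`. The dimension identity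
turns such a covering into `|A|_w ≤ d_γ² |B|_w`, so the boundary ratios of `γ̄` and `γ` are
dominated by those of `γ`, resp. of `γ₁` and `γ₂`.
-/

open Filter Topology

/-- The boundary `∂_γ(F)` of a finite set `F ⊆ Ĝ` relative to an irreducible `γ`. -/
def bdry {ι : Type*} (N : ι → ι → ι → ℕ) (γ : ι) (F : Finset ι) : Set ι :=
  {α | α ∈ F ∧ ∃ β ∉ F, N α γ β ≠ 0} ∪ {α | α ∉ F ∧ ∃ β ∈ F, N α γ β ≠ 0}

/-- `γ` fixes the sequence `Σ = {F_n}` if `|∂_γ(F_n)|_w / |F_n|_w → 0`, where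
`|F|_w = ∑_{α ∈ F} d_α²` is the weighted cardinality. -/
def RepFixes {ι : Type*} (N : ι → ι → ι → ℕ) (d : ι → ℕ) (F : ℕ → Finset ι)
    (hbfin : ∀ (γ : ι) (S : Finset ι), (bdry N γ S).Finite) (γ : ι) : Prop :=
  Tendsto (fun n => ((∑ α ∈ (hbfin γ (F n)).toFinset, (d α) ^ 2 : ℕ) : ℝ) /
    ((∑ α ∈ F n, (d α) ^ 2 : ℕ) : ℝ)) atTop (𝓝 0)

open Finset

lemma tendsto_natCast_div_of_le_add_mul {a b₁ b₂ D : ℕ → ℕ} (c : ℕ)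
    (h : ∀ n, a n ≤ b₁ n + c * b₂ n)
    (h₁ : Tendsto (fun n => (b₁ n : ℝ) / D n) atTop (𝓝 0))
    (h₂ : Tendsto (fun n => (b₂ n : ℝ) / D n) atTop (𝓝 0)) :
    Tendsto (fun n => (a n : ℝ) / D n) atTop (𝓝 0) := by
  have hup : Tendsto (fun n => (b₁ n : ℝ) / D n + c * ((b₂ n : ℝ) / D n)) atTop (𝓝 0) := by
    simpa using h₁.add (h₂.const_mul (c : ℝ))
  refine tendsto_of_tendsto_of_tendsto_of_le_of_le tendsto_const_nhds hup
    (fun n => by positivity) fun n => ?_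
  rw [mul_div_assoc', ← add_div]
  have hn : (a n : ℝ) ≤ b₁ n + c * b₂ n := by exact_mod_cast h n
  exact div_le_div_of_nonneg_right hn (Nat.cast_nonneg _)

section Fusion

variable {ι : Type*} {N : ι → ι → ι → ℕ} {d : ι → ℕ}

def weightedCard (d : ι → ℕ) (S : Finset ι) : ℕ := ∑ α ∈ S, d α ^ 2

@[simp]
lemma mem_bdry {γ α : ι} {S : Finset ι} :
    α ∈ bdry N γ S ↔
      (α ∈ S ∧ ∃ β ∉ S, N α γ β ≠ 0) ∨ (α ∉ S ∧ ∃ β ∈ S, N α γ β ≠ 0) :=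
  Iff.rfl

lemma bdry_eq_empty_of_unit [DecidableEq ι] {one : ι}
    (hone : ∀ α β, N α one β = if α = β then 1 else 0) (S : Finset ι) :
    bdry N one S = ∅ := by
  ext α
  simp only [mem_bdry, hone, ne_eq, ite_eq_right_iff, Classical.not_imp,
    Set.mem_empty_iff_false, iff_false]
  rintro (⟨hαS, β, hβS, rfl, -⟩ | ⟨hαS, β, hβS, rfl, -⟩) <;> contradiction

section Dimension

variable (hfin : ∀ α γ, {β | N α γ β ≠ 0}.Finite)
  (hdim : ∀ α γ, ∀ S : Finset ι, (∀ β, N α γ β ≠ 0 → β ∈ S) →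
    d α * d γ = ∑ β ∈ S, N α γ β * d β)
include hfin hdim

lemma sum_fusion_mul_dim_le (α γ : ι) (S : Finset ι) :
    ∑ β ∈ S, N α γ β * d β ≤ d α * d γ := by
  classical
  have hS : ∀ β, N α γ β ≠ 0 → β ∈ S ∪ (hfin α γ).toFinset :=
    fun β h => mem_union_right _ ((hfin α γ).mem_toFinset.2 h)
  rw [hdim α γ _ hS]
  exact sum_le_sum_of_subset subset_union_left

lemma dim_le_of_fusion_ne_zero {α γ β : ι} (h : N α γ β ≠ 0) : d β ≤ d α * d γ :=
  calc d β ≤ N α γ β * d β := Nat.le_mul_of_pos_left _ (Nat.pos_of_ne_zero h)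
    _ = ∑ x ∈ {β}, N α γ x * d x := by rw [sum_singleton]
    _ ≤ d α * d γ := sum_fusion_mul_dim_le hfin hdim α γ {β}

/-- Double counting `∑_{α ∈ A} ∑_{β ∈ B} d_β d_γ N_{βγ}^α d_α` in both orders. -/
lemma weightedCard_le_of_forall_exists_fusion_ne_zero (γ : ι) {A B : Finset ι}
    (hcover : ∀ α ∈ A, ∃ β ∈ B, N β γ α ≠ 0) :
    weightedCard d A ≤ d γ ^ 2 * weightedCard d B := by
  unfold weightedCard
  calc ∑ α ∈ A, d α ^ 2 ≤ ∑ α ∈ A, ∑ β ∈ B, d β * d γ * (N β γ α * d α) := by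
        refine sum_le_sum fun α hα => ?_
        obtain ⟨β, hβB, hβ⟩ := hcover α hα
        calc d α ^ 2 = d α * d α := sq (d α)
          _ ≤ d β * d γ * (N β γ α * d α) :=
            Nat.mul_le_mul (dim_le_of_fusion_ne_zero hfin hdim hβ)
              (Nat.le_mul_of_pos_left _ (Nat.pos_of_ne_zero hβ))
          _ ≤ _ := single_le_sum (f := fun β => d β * d γ * (N β γ α * d α))
            (fun _ _ => Nat.zero_le _) hβB
    _ = ∑ β ∈ B, d β * d γ * ∑ α ∈ A, N β γ α * d α := by
        rw [sum_comm]
        simp only [mul_sum]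
    _ ≤ ∑ β ∈ B, d β * d γ * (d β * d γ) := by
        gcongr with β
        exact sum_fusion_mul_dim_le hfin hdim β γ A
    _ = d γ ^ 2 * ∑ β ∈ B, d β ^ 2 := by
        rw [mul_sum]
        exact sum_congr rfl fun β _ => by ring

lemma weightedCard_le_add_of_forall_mem_or_exists (γ : ι) {A B₁ B₂ : Finset ι}
    (hcover : ∀ α ∈ A, α ∉ B₁ → ∃ β ∈ B₂, N β γ α ≠ 0) :
    weightedCard d A ≤ weightedCard d B₁ + d γ ^ 2 * weightedCard d B₂ := by
  classical
  have hsplit : weightedCard d A =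
      weightedCard d (A.filter (· ∈ B₁)) + weightedCard d (A.filter (· ∉ B₁)) :=
    (sum_filter_add_sum_filter_not A _ _).symm
  rw [hsplit]
  gcongr
  · exact sum_le_sum_of_subset fun α hα => (mem_filter.1 hα).2
  · refine weightedCard_le_of_forall_exists_fusion_ne_zero hfin hdim γ fun α hα => ?_
    exact hcover α (mem_filter.1 hα).1 (mem_filter.1 hα).2

end Dimension

lemma exists_mem_bdry_of_mem_bdry_conj {conj : ι → ι}
    (hfrob : ∀ α γ β, N α γ β = N β (conj γ) α) {γ α : ι} {S : Finset ι}
    (hα : α ∈ bdry N (conj γ) S) : ∃ β ∈ bdry N γ S, N β γ α ≠ 0 := by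
  rcases hα with ⟨hαS, β, hβS, h⟩ | ⟨hαS, β, hβS, h⟩ <;> rw [← hfrob] at h
  · exact ⟨β, Or.inr ⟨hβS, α, hαS, h⟩, h⟩
  · exact ⟨β, Or.inl ⟨hβS, α, hαS, h⟩, h⟩

lemma exists_mem_bdry_of_mem_bdry_of_not_mem_bdry {γ₁ γ₂ γ α : ι} {S : Finset ι}
    (hassoc : ∀ α β, N α γ β ≠ 0 → ∃ η, N α γ₁ η ≠ 0 ∧ N η γ₂ β ≠ 0)
    (hα : α ∈ bdry N γ S) (hα₁ : α ∉ bdry N γ₁ S) : ∃ η ∈ bdry N γ₂ S, N α γ₁ η ≠ 0 := by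
  rcases hα with ⟨hαS, β, hβS, h⟩ | ⟨hαS, β, hβS, h⟩ <;>
    obtain ⟨η, hη₁, hη₂⟩ := hassoc α β h <;> by_cases hηS : η ∈ S
  · exact ⟨η, Or.inl ⟨hηS, β, hβS, hη₂⟩, hη₁⟩
  · exact absurd (Or.inl ⟨hαS, η, hηS, hη₁⟩) hα₁
  · exact absurd (Or.inr ⟨hαS, η, hηS, hη₁⟩) hα₁
  · exact ⟨η, Or.inr ⟨hηS, β, hβS, hη₂⟩, hη₁⟩

lemma RepFixes.of_weightedCard_le {F : ℕ → Finset ι}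
    {hbfin : ∀ (γ : ι) (S : Finset ι), (bdry N γ S).Finite} {γ γ₁ γ₂ : ι} (c : ℕ)
    (h : ∀ n, weightedCard d (hbfin γ (F n)).toFinset ≤
      weightedCard d (hbfin γ₁ (F n)).toFinset + c * weightedCard d (hbfin γ₂ (F n)).toFinset)
    (h₁ : RepFixes N d F hbfin γ₁) (h₂ : RepFixes N d F hbfin γ₂) :
    RepFixes N d F hbfin γ :=
  tendsto_natCast_div_of_le_add_mul c h h₁ h₂

end Fusion

theorem stmt17_general {ι : Type*} [DecidableEq ι] (N : ι → ι → ι → ℕ) (d : ι → ℕ) (conj : ι → ι)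
    (one : ι)
    (hone : ∀ α β, N α one β = if α = β then 1 else 0)
    (hdconj : ∀ γ, d (conj γ) = d γ)
    (hfrob : ∀ α γ β, N α γ β = N β (conj γ) α)
    (hfin : ∀ α γ, {β | N α γ β ≠ 0}.Finite)
    (hdim : ∀ α γ, ∀ S : Finset ι, (∀ β, N α γ β ≠ 0 → β ∈ S) →
      d α * d γ = ∑ β ∈ S, N α γ β * d β)
    (hassoc : ∀ γ₁ γ₂ α β, (∃ γ, N γ₁ γ₂ γ ≠ 0 ∧ N α γ β ≠ 0) ↔
      (∃ η, N α γ₁ η ≠ 0 ∧ N η γ₂ β ≠ 0))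
    (hbfin : ∀ (γ : ι) (S : Finset ι), (bdry N γ S).Finite)
    (F : ℕ → Finset ι) :
    RepFixes N d F hbfin one ∧
      (∀ γ, RepFixes N d F hbfin γ → RepFixes N d F hbfin (conj γ)) ∧
      (∀ γ₁ γ₂ γ, RepFixes N d F hbfin γ₁ → RepFixes N d F hbfin γ₂ →
        N γ₁ γ₂ γ ≠ 0 → RepFixes N d F hbfin γ) := by
  refine ⟨?_, fun γ hγ => ?_, fun γ₁ γ₂ γ h₁ h₂ hγ => ?_⟩
  · simp only [RepFixes, Set.Finite.toFinset_eq_empty.2 (bdry_eq_empty_of_unit hone _),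
      sum_empty, Nat.cast_zero, zero_div]
    exact tendsto_const_nhds
  · refine RepFixes.of_weightedCard_le (γ₁ := γ) (d γ ^ 2) (fun n => ?_) hγ hγ
    refine le_add_left (weightedCard_le_of_forall_exists_fusion_ne_zero hfin hdim γ ?_)
    intro α hα
    obtain ⟨β, hβ, h⟩ := exists_mem_bdry_of_mem_bdry_conj hfrob ((hbfin _ _).mem_toFinset.1 hα)
    exact ⟨β, (hbfin _ _).mem_toFinset.2 hβ, h⟩
  · refine RepFixes.of_weightedCard_le (d γ₁ ^ 2) (fun n => ?_) h₁ h₂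
    rw [← hdconj γ₁]
    refine weightedCard_le_add_of_forall_mem_or_exists hfin hdim (conj γ₁) fun α hα hα₁ => ?_
    obtain ⟨η, hη, h⟩ := exists_mem_bdry_of_mem_bdry_of_not_mem_bdry
      (fun α β h => (hassoc γ₁ γ₂ α β).1 ⟨γ, hγ, h⟩) ((hbfin _ _).mem_toFinset.1 hα)
      (mt (hbfin _ _).mem_toFinset.2 hα₁)
    exact ⟨η, (hbfin _ _).mem_toFinset.2 hη, by rwa [← hfrob]⟩

/-- The set `Ĝ_Σ` of irreducibles fixing `Σ` contains the trivial representation, is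
closed under conjugation, and is closed under taking irreducible constituents of tensor
products of its elements; hence it generates a quantum subgroup. -/
theorem stmt17 {ι : Type*} [DecidableEq ι] (N : ι → ι → ι → ℕ) (d : ι → ℕ) (conj : ι → ι)
    (one : ι)
    (hone : ∀ α β, N α one β = if α = β then 1 else 0)
    (hd : ∀ α, 0 < d α)
    (hdconj : ∀ γ, d (conj γ) = d γ)
    (hfrob : ∀ α γ β, N α γ β = N β (conj γ) α)
    (hfrob' : ∀ α γ β, N α γ β = N (conj α) β γ)
    (hfin : ∀ α γ, {β | N α γ β ≠ 0}.Finite)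
    (hfin' : ∀ γ β, {α | N α γ β ≠ 0}.Finite)
    (hdim : ∀ α γ, ∀ S : Finset ι, (∀ β, N α γ β ≠ 0 → β ∈ S) →
      d α * d γ = ∑ β ∈ S, N α γ β * d β)
    (hassoc : ∀ γ₁ γ₂ α β, (∃ γ, N γ₁ γ₂ γ ≠ 0 ∧ N α γ β ≠ 0) ↔
      (∃ η, N α γ₁ η ≠ 0 ∧ N η γ₂ β ≠ 0))
    (hbfin : ∀ (γ : ι) (S : Finset ι), (bdry N γ S).Finite)
    (F : ℕ → Finset ι) :
    RepFixes N d F hbfin one ∧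
      (∀ γ, RepFixes N d F hbfin γ → RepFixes N d F hbfin (conj γ)) ∧
      (∀ γ₁ γ₂ γ, RepFixes N d F hbfin γ₁ → RepFixes N d F hbfin γ₂ →
        N γ₁ γ₂ γ ≠ 0 → RepFixes N d F hbfin γ) :=
  stmt17_general N d conj one hone hdconj hfrob hfin hdim hassoc hbfin F
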